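/- arXiv:1202.6180 — 2 statements merged into one kernel-verified Lean document; each statement's English description precedes it below -/
import Mathlib

section
/- For any set X, the following are equivalent: (a) Top(X) is a G_δ subset of 2^{P(X)}; (b) Top(X) is an F_σ subset of 2^{P(X)}; (c) X is finite. -/
/-- The Cantor-cube topology on `Set (Set X)` (identifying `𝒫(𝒫(X))` with `2^{𝒫(X)}`):
the product topology, whose subbasic open sets are
`A⁺ = {x | A ∈ x}` and `A⁻ = {x | A ∉ x}` for `A ⊆ X`. -/
def cantorTop (X : Type*) : TopologicalSpace (Set (Set X)) :=
  TopologicalSpace.generateFrom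
    ({U | ∃ A : Set X, U = {x : Set (Set X) | A ∈ x}} ∪
     {U | ∃ A : Set X, U = {x : Set (Set X) | A ∉ x}})

/-- `τ` is a topology on `X`: it contains `∅` and `X` and is closed under
pairwise intersections and arbitrary unions. -/
def IsTopologyOn {X : Type*} (τ : Set (Set X)) : Prop :=
  ∅ ∈ τ ∧ Set.univ ∈ τ ∧ (∀ a ∈ τ, ∀ b ∈ τ, a ∩ b ∈ τ) ∧ ∀ S ⊆ τ, ⋃₀ S ∈ τ

open scoped Topology

/-!
For finite `X` the cube is a finite product of discrete spaces, hence discrete. For infinite `X`,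
inject the lexicographic square `ℕ ×ₗ ℕ` into `X` by `e`. The images `e '' Iio i` of initial
segments form a chain, so a family of them together with `∅`, `X` and `range e` is a topology as
soon as it contains the union of each of its subfamilies; such a union is a largest member, or
`range e`, or the image of a limit segment `Iio (n + 1, 0)`. Sending `s : ℕ → Bool` to
the family indexed by the points `(0, j)` with `s j` is continuous and pulls the topologies back
to the finitely supported sequences; a second continuous map, built on the whole `ω²`-chain,
pulls them back to the sequences with infinite support. The finitely supported sequences form a
countable set which is dense and codense in the Baire space `ℕ → Bool`, so they are not a `G_δ`;
hence the topologies form neither a `G_δ` nor an `F_σ`.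
-/

open Set Function Filter

section CantorCube

variable {X : Type*}

instance : TopologicalSpace (Set (Set X)) := cantorTop X

lemma isOpen_setOf_mem (A : Set X) : IsOpen {x : Set (Set X) | A ∈ x} :=
  .basic _ (.inl ⟨A, rfl⟩)

lemma isOpen_setOf_notMem (A : Set X) : IsOpen {x : Set (Set X) | A ∉ x} :=
  .basic _ (.inr ⟨A, rfl⟩)

instance [Finite X] : DiscreteTopology (Set (Set X)) := by
  refine discreteTopology_iff_isOpen_singleton.2 fun x₀ => ?_
  have hx₀ : {x₀} = ⋂ A : Set X, {x : Set (Set X) | A ∈ x ↔ A ∈ x₀} := by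
    ext x
    simp only [mem_singleton_iff, mem_iInter, mem_ofPred_eq]
    exact ⟨fun h A => h ▸ Iff.rfl, fun h => Set.ext h⟩
  rw [hx₀]
  refine isOpen_iInter_of_finite fun A => ?_
  by_cases hA : A ∈ x₀
  · simpa [hA] using isOpen_setOf_mem A
  · simpa [hA] using isOpen_setOf_notMem A

lemma continuous_of_isClopen_setOf_mem {Y : Type*} [TopologicalSpace Y] {f : Y → Set (Set X)}
    (hf : ∀ A, IsClopen {y | A ∈ f y}) : Continuous f := by
  refine continuous_generateFrom_iff.2 ?_
  rintro _ (⟨A, rfl⟩ | ⟨A, rfl⟩)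
  · exact (hf A).isOpen
  · exact (hf A).compl.isOpen

end CantorCube

section ChainFamily

variable {ι X : Type*} [LinearOrder ι] {e : ι → X} {P : Set ι}

def chainFamily (e : ι → X) (P : Set ι) : Set (Set X) :=
  {∅, univ, range e} ∪ (fun i => e '' Iio i) '' P

lemma mem_chainFamily {A : Set X} :
    A ∈ chainFamily e P ↔ A = ∅ ∨ A = univ ∨ A = range e ∨ ∃ i ∈ P, e '' Iio i = A := by
  simp only [chainFamily, mem_union, mem_insert_iff, mem_singleton_iff, mem_image, or_assoc]

lemma image_Iio_inj (he : Injective e) {i j : ι} : e '' Iio i = e '' Iio j ↔ i = j :=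
  he.image_injective.eq_iff.trans Iio_inj

lemma isChain_chainFamily : IsChain (· ⊆ ·) (chainFamily e P) := by
  intro A hA B hB _
  rcases mem_chainFamily.1 hA with rfl | rfl | rfl | ⟨i, -, rfl⟩ <;>
  rcases mem_chainFamily.1 hB with rfl | rfl | rfl | ⟨j, -, rfl⟩ <;>
  first
  | exact (le_total i j).imp (fun h => image_mono (Iio_subset_Iio h))
      (fun h => image_mono (Iio_subset_Iio h))
  | simp

lemma biUnion_mem_chainFamily {T : Set ι} (hTP : T ⊆ P) (hT : T.Finite ∨ ¬BddAbove T) :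
    ⋃ i ∈ T, e '' Iio i ∈ chainFamily e P := by
  rw [← image_iUnion₂]
  rcases hT with hfin | hunb
  · rcases T.eq_empty_or_nonempty with rfl | hne
    · simp [mem_chainFamily]
    obtain ⟨m, hmT, hm⟩ := exists_max_image T id hfin hne
    have : ⋃ i ∈ T, Iio i = Iio m :=
      (iUnion₂_subset fun i hi => Iio_subset_Iio (hm i hi)).antisymm (subset_biUnion_of_mem hmT)
    exact mem_chainFamily.2 (.inr (.inr (.inr ⟨m, hTP hmT, by rw [this]⟩)))
  · have : ⋃ i ∈ T, Iio i = univ := by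
      rw [not_bddAbove_iff] at hunb
      exact eq_univ_of_forall fun j =>
        let ⟨i, hi, hji⟩ := hunb j
        mem_iUnion₂.2 ⟨i, hi, hji⟩
    exact mem_chainFamily.2 (.inr (.inr (.inl (by rw [this, image_univ]))))

lemma isTopologyOn_chainFamily (hP : ∀ T ⊆ P, T.Finite ∨ ¬BddAbove T) :
    IsTopologyOn (chainFamily e P) := by
  refine ⟨by simp [mem_chainFamily], by simp [mem_chainFamily], fun A hA B hB => ?_,
    fun S hS => ?_⟩
  · rcases isChain_chainFamily.total hA hB with h | h
    · rwa [inter_eq_left.2 h]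
    · rwa [inter_eq_right.2 h]
  by_cases hu : univ ∈ S
  · rw [eq_univ_of_univ_subset (subset_sUnion_of_mem hu)]
    exact hS hu
  by_cases hr : range e ∈ S
  · suffices ⋃₀ S = range e from this ▸ hS hr
    refine (sUnion_subset fun A hA => ?_).antisymm (subset_sUnion_of_mem hr)
    rcases mem_chainFamily.1 (hS hA) with rfl | rfl | rfl | ⟨i, -, rfl⟩
    exacts [empty_subset _, absurd hA hu, Subset.rfl, image_subset_range _ _]
  have hS_eq : ⋃₀ S = ⋃ i ∈ {i ∈ P | e '' Iio i ∈ S}, e '' Iio i := by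
    refine (sUnion_subset fun A hA => ?_).antisymm
      (iUnion₂_subset fun i hi => subset_sUnion_of_mem hi.2)
    rcases mem_chainFamily.1 (hS hA) with rfl | rfl | rfl | ⟨i, hi, rfl⟩
    exacts [empty_subset _, absurd hA hu, absurd hA hr,
      subset_biUnion_of_mem (u := fun i => e '' Iio i) ⟨hi, hA⟩]
  rw [hS_eq]
  exact biUnion_mem_chainFamily (fun i hi => hi.1) (hP _ fun i hi => hi.1)

lemma not_isTopologyOn_chainFamily (he : Injective e) {T : Set ι} {i₀ : ι} (hTP : T ⊆ P)
    (hT : T.Nonempty) (hlub : IsLUB T i₀) (hi₀ : i₀ ∉ P) : ¬IsTopologyOn (chainFamily e P) := by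
  intro h
  have hmem := h.2.2.2 ((fun i => e '' Iio i) '' T) fun _ ⟨i, hi, hA⟩ =>
    mem_chainFamily.2 (.inr (.inr (.inr ⟨i, hTP hi, hA⟩)))
  rw [sUnion_image, ← image_iUnion₂, hlub.biUnion_Iio_eq] at hmem
  have hi₀_notMem : e i₀ ∉ e '' Iio i₀ := by simp [he.mem_set_image]
  rcases mem_chainFamily.1 hmem with h0 | hu | hr | ⟨j, hj, hE⟩
  · obtain ⟨t, ht⟩ := hT
    have hlt : t < i₀ := (hlub.1 ht).lt_of_ne fun h => hi₀ (h ▸ hTP ht)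
    exact (image_eq_empty.1 h0).subset hlt
  · exact hi₀_notMem (hu ▸ mem_univ _)
  · exact hi₀_notMem (hr ▸ mem_range_self _)
  · exact hi₀ ((image_Iio_inj he).1 hE ▸ hj)

lemma continuous_chainFamily (he : Injective e) {Y : Type*} [TopologicalSpace Y] {P : Y → Set ι}
    (hP : ∀ i, IsClopen {y | i ∈ P y}) : Continuous fun y => chainFamily e (P y) := by
  refine continuous_of_isClopen_setOf_mem fun A => ?_
  simp only [mem_chainFamily]
  by_cases hA : A = ∅ ∨ A = univ ∨ A = range e
  · convert isClopen_univ (X := Y) using 1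
    ext y
    simp only [mem_ofPred_eq, mem_univ, iff_true]
    tauto
  by_cases hE : ∃ i, e '' Iio i = A
  · obtain ⟨i, rfl⟩ := hE
    convert hP i using 1
    ext y
    simp only [mem_ofPred_eq, image_Iio_inj he, exists_eq_right]
    tauto
  · convert isClopen_empty (X := Y) using 1
    ext y
    simp only [not_exists] at hE
    simp [hE, hA]

end ChainFamily

theorem Set.Countable.not_isGδ {Y : Type*} [TopologicalSpace Y] [T1Space Y] [BaireSpace Y]
    [Nonempty Y] {s : Set Y} (hs : s.Countable) (hd : Dense s) (hdc : Dense sᶜ) : ¬IsGδ s := by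
  intro hG
  have := Dense.inter_of_Gδ hG hs.isGδ_compl hd hdc
  rw [inter_compl_self] at this
  exact this.nonempty.ne_empty rfl

section CantorSpace

lemma tendsto_ite_lt_nhds {β : Type*} [TopologicalSpace β] (s t : ℕ → β) :
    Tendsto (fun N n => if n < N then s n else t n) atTop (𝓝 s) :=
  tendsto_pi_nhds.2 fun n => tendsto_const_nhds.congr'
    ((eventually_gt_atTop n).mono fun _ h => (if_pos h).symm)

lemma countable_setOf_finite_true : {s : ℕ → Bool | {n | s n = true}.Finite}.Countable := by
  have hinj : Injective fun (s : ℕ → Bool) => {n | s n = true} :=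
    fun s t h => funext fun n => Bool.eq_iff_iff.2 (Set.ext_iff.1 h n)
  refine Countable.mono (fun s hs => ?_)
    ((countable_ofPred_finite_subset countable_univ).preimage hinj)
  exact ⟨hs, subset_univ _⟩

lemma dense_setOf_finite_true : Dense {s : ℕ → Bool | {n | s n = true}.Finite} := fun s =>
  mem_closure_of_tendsto (tendsto_ite_lt_nhds s fun _ => false) <| .of_forall fun N =>
    (finite_Iio N).subset fun n => by
      simp only [mem_ofPred_eq, mem_Iio]
      split_ifs with h <;> simp [h]

lemma dense_compl_setOf_finite_true : Dense {s : ℕ → Bool | {n | s n = true}.Finite}ᶜ := fun s =>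
  mem_closure_of_tendsto (tendsto_ite_lt_nhds s fun _ => true) <| .of_forall fun N =>
    (Ici_infinite N).mono fun n hn => by simp [mem_Ici.1 hn]

lemma isClopen_setOf_apply_eq {ι β : Type*} [TopologicalSpace β] [DiscreteTopology β] (i : ι)
    (b : β) : IsClopen {f : ι → β | f i = b} :=
  (isClopen_discrete {b}).preimage (continuous_apply i)

lemma not_isGδ_setOf_finite_true : ¬IsGδ {s : ℕ → Bool | {n | s n = true}.Finite} :=
  countable_setOf_finite_true.not_isGδ dense_setOf_finite_true dense_compl_setOf_finite_true

end CantorSpace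

section LexChain

variable {X : Type*} {e : ℕ ×ₗ ℕ → X}

lemma isLUB_column (N : ℕ) {J : Set ℕ} (hJ : J.Infinite) :
    IsLUB (ofLex ⁻¹' ({N} ×ˢ J) : Set (ℕ ×ₗ ℕ)) (toLex (N + 1, 0)) := by
  refine ⟨fun p hp => ?_, fun u hu => ?_⟩
  · rw [mem_preimage, mem_prod, mem_singleton_iff] at hp
    exact Prod.Lex.le_iff.2 (.inl (by simp; omega))
  · obtain ⟨j, hj, hju⟩ := hJ.exists_gt (ofLex u).2
    have := hu (show toLex (N, j) ∈ _ from ⟨rfl, hj⟩)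
    rw [Prod.Lex.le_iff] at this ⊢
    simp only [ofLex_toLex] at this ⊢
    omega

lemma not_isTopologyOn_of_infinite_column (he : Injective e) {P : Set (ℕ ×ₗ ℕ)} {N : ℕ}
    {J : Set ℕ} (hJ : J.Infinite) (hJP : ofLex ⁻¹' ({N} ×ˢ J) ⊆ P) (hN : toLex (N + 1, 0) ∉ P) :
    ¬IsTopologyOn (chainFamily e P) :=
  let ⟨j, hj⟩ := hJ.nonempty
  not_isTopologyOn_chainFamily he hJP ⟨toLex (N, j), rfl, hj⟩ (isLUB_column N hJ) hN

def supportInColumnZero (s : ℕ → Bool) : Set (ℕ ×ₗ ℕ) := ofLex ⁻¹' ({0} ×ˢ {j | s j = true})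

/-- Column `n` is finite iff `s` is true somewhere after `n`; a full column `n` would need the
union `e '' Iio (n + 1, 0)`, whose index is never in `gapIndices s`. -/
def gapIndices (s : ℕ → Bool) : Set (ℕ ×ₗ ℕ) :=
  ofLex ⁻¹' {p | 0 < p.2 ∧ ∀ m ∈ Finset.Ioo p.1 (p.1 + p.2), s m = false}

lemma isClopen_setOf_mem_supportInColumnZero (i : ℕ ×ₗ ℕ) :
    IsClopen {s | i ∈ supportInColumnZero s} := by
  by_cases h : (ofLex i).1 = 0
  · simpa [supportInColumnZero, h] using isClopen_setOf_apply_eq (ofLex i).2 true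
  · simpa [supportInColumnZero, h] using isClopen_empty

lemma isClopen_setOf_mem_gapIndices (i : ℕ ×ₗ ℕ) : IsClopen {s | i ∈ gapIndices s} := by
  by_cases h : 0 < (ofLex i).2
  · convert isClopen_biInter_finset (s := Finset.Ioo (ofLex i).1 ((ofLex i).1 + (ofLex i).2))
      fun m _ => isClopen_setOf_apply_eq m false using 1
    ext s
    simp [gapIndices, h]
  · simpa [gapIndices, h] using isClopen_empty

lemma isTopologyOn_chainFamily_supportInColumnZero_iff (he : Injective e) (s : ℕ → Bool) :
    IsTopologyOn (chainFamily e (supportInColumnZero s)) ↔ {n | s n = true}.Finite := by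
  refine ⟨fun h => ?_, fun hs => isTopologyOn_chainFamily fun T hT => .inl ?_⟩
  · by_contra hs
    exact not_isTopologyOn_of_infinite_column he hs subset_rfl (by simp) h
  · exact (((finite_singleton 0).prod hs).preimage ofLex.injective.injOn).subset hT

lemma finite_gapIndices_inter_Iic {s : ℕ → Bool} (hs : {n | s n = true}.Infinite)
    (u : ℕ ×ₗ ℕ) : (gapIndices s ∩ Iic u).Finite := by
  obtain ⟨m, hm, hum⟩ := hs.exists_gt (ofLex u).1
  refine (((finite_Iic (ofLex u).1).prod (finite_Iic m)).preimage
    ofLex.injective.injOn).subset ?_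
  rintro p ⟨⟨hp0, hgap⟩, hpu⟩
  rw [mem_Iic, Prod.Lex.le_iff] at hpu
  have hpu' : (ofLex p).1 ≤ (ofLex u).1 := by omega
  refine ⟨mem_Iic.2 hpu', mem_Iic.2 (not_lt.1 fun hmp => ?_)⟩
  have := hgap m (Finset.mem_Ioo.2 ⟨by omega, by omega⟩)
  simp_all

lemma isTopologyOn_chainFamily_gapIndices_iff (he : Injective e) (s : ℕ → Bool) :
    IsTopologyOn (chainFamily e (gapIndices s)) ↔ {n | s n = true}.Infinite := by
  refine ⟨fun h hs => ?_, fun hs => isTopologyOn_chainFamily fun T hT => ?_⟩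
  · obtain ⟨N, hN⟩ := hs.bddAbove
    refine not_isTopologyOn_of_infinite_column he (Ioi_infinite 0) (N := N) ?_
      (by simp [gapIndices]) h
    rintro p ⟨hpN, hp⟩
    refine ⟨hp, fun m hm => Bool.eq_false_iff.2 fun hsm => ?_⟩
    rw [mem_singleton_iff] at hpN
    rw [Finset.mem_Ioo] at hm
    have := hN hsm
    omega
  · rw [or_iff_not_imp_right, not_not]
    rintro ⟨u, hu⟩
    exact (finite_gapIndices_inter_Iic hs u).subset fun p hp => ⟨hT hp, hu hp⟩

end LexChain

section InfiniteSpace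

variable {X : Type*} [Infinite X]

lemma exists_injective_lex : ∃ e : ℕ ×ₗ ℕ → X, Injective e :=
  ⟨Infinite.natEmbedding X ∘ Nat.pairEquiv ∘ ofLex,
    (Infinite.natEmbedding X).injective.comp (Nat.pairEquiv.injective.comp ofLex.injective)⟩

lemma not_isGδ_setOf_isTopologyOn : ¬IsGδ {τ : Set (Set X) | IsTopologyOn τ} := fun h => by
  obtain ⟨e, he⟩ := exists_injective_lex (X := X)
  refine not_isGδ_setOf_finite_true ?_
  convert h.preimage (continuous_chainFamily he isClopen_setOf_mem_supportInColumnZero)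
  ext s
  exact (isTopologyOn_chainFamily_supportInColumnZero_iff he s).symm

lemma not_isGδ_setOf_not_isTopologyOn : ¬IsGδ {τ : Set (Set X) | ¬IsTopologyOn τ} := fun h => by
  obtain ⟨e, he⟩ := exists_injective_lex (X := X)
  refine not_isGδ_setOf_finite_true ?_
  convert h.preimage (continuous_chainFamily he isClopen_setOf_mem_gapIndices)
  ext s
  simp [isTopologyOn_chainFamily_gapIndices_iff he]

end InfiniteSpace

theorem stmt10 {X : Type*} :
    (@IsGδ _ (cantorTop X) {τ : Set (Set X) | IsTopologyOn τ} ↔ Finite X) ∧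
    ((∃ C : ℕ → Set (Set (Set X)), (∀ n, IsClosed[cantorTop X] (C n)) ∧
        {τ : Set (Set X) | IsTopologyOn τ} = ⋃ n, C n) ↔ Finite X) := by
  refine ⟨⟨fun h => ?_, fun _ => (isOpen_discrete _).isGδ⟩,
    ⟨fun ⟨C, hC, h⟩ => ?_,
      fun _ => ⟨fun _ => _, fun _ => isClosed_discrete _, (iUnion_const _).symm⟩⟩⟩
  · by_contra hX
    have := not_finite_iff_infinite.1 hX
    exact not_isGδ_setOf_isTopologyOn h
  · by_contra hX
    have := not_finite_iff_infinite.1 hX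
    refine not_isGδ_setOf_not_isTopologyOn (X := X) ?_
    rw [← compl_ofPred, h, compl_iUnion]
    exact .iInter_of_isOpen fun n => (hC n).isOpen_compl
end

section
/- Let X be an infinite set and let Y be any set with |Y| ≤ |X|. Then Top(X), with its subspace topology from 2^{P(X)}, contains a homeomorphic copy of the Stone–Čech compactification βY of the discrete space Y; that is, there is a topological embedding of the space of ultrafilters on Y with the Stone topology (basic open sets {F : A ∈ F} for A ⊆ Y) into the subspace Top(X) of 2^{P(X)}. -/
universe u

/-!
An injection `j : Y → X` sends an ultrafilter `F` on `Y` to the topology on `X` whose open sets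
are `∅` and the members of `j_* F`. This map `βY → Top(X)` is continuous, because the preimage
of `A⁺` is the basic open set of `j⁻¹ A` (or everything, if `A = ∅`) and that of `A⁻` is the
basic open set of `(j⁻¹ A)ᶜ` (or nothing); and it is injective, because `j_* F` determines `F`.
As `βY` is compact and the Cantor cube is Hausdorff, it is a closed embedding.
-/

open Function Set

namespace Filter

variable {X : Type*}

def insertEmpty (f : Filter X) : Set (Set X) := insert ∅ f.sets

theorem mem_insertEmpty {f : Filter X} {U : Set X} : U ∈ f.insertEmpty ↔ U = ∅ ∨ U ∈ f :=
  Iff.rfl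

theorem isTopologyOn_insertEmpty (f : Filter X) : IsTopologyOn f.insertEmpty := by
  refine ⟨Or.inl rfl, Or.inr univ_mem, ?_, fun S hS => ?_⟩
  · rintro a (rfl | ha) b (rfl | hb)
    exacts [Or.inl (empty_inter _), Or.inl (empty_inter _), Or.inl (inter_empty _),
      Or.inr (inter_mem ha hb)]
  · by_cases h : ∃ U ∈ S, U ∈ f
    · obtain ⟨U, hUS, hUf⟩ := h
      exact Or.inr (mem_of_superset hUf (subset_sUnion_of_mem hUS))
    · exact Or.inl (sUnion_eq_empty.2 fun U hU => (hS hU).resolve_right fun hUf => h ⟨U, hU, hUf⟩)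

theorem insertEmpty_injective_ultrafilter :
    Injective fun F : Ultrafilter X => (F : Filter X).insertEmpty := by
  intro F G h
  ext s
  simp only at h
  have key : ∀ F : Ultrafilter X, s ∈ F ↔ s ∈ (F : Filter X).insertEmpty ∧ s.Nonempty := fun F =>
    ⟨fun hs => ⟨Or.inr hs, Ultrafilter.nonempty_of_mem hs⟩,
      fun ⟨hs, hne⟩ => hs.resolve_left hne.ne_empty⟩
  rw [key F, key G, h]

end Filter

section CantorCube

attribute [local instance] cantorTop

theorem isOpen_cantorTop_mem (X : Type*) (A : Set X) : IsOpen {x : Set (Set X) | A ∈ x} :=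
  TopologicalSpace.isOpen_generateFrom_of_mem (Or.inl ⟨A, rfl⟩)

theorem isOpen_cantorTop_notMem (X : Type*) (A : Set X) : IsOpen {x : Set (Set X) | A ∉ x} :=
  TopologicalSpace.isOpen_generateFrom_of_mem (Or.inr ⟨A, rfl⟩)

theorem t2Space_cantorTop (X : Type*) : T2Space (Set (Set X)) := by
  refine ⟨fun x y hxy => ?_⟩
  obtain ⟨A, hA⟩ : ∃ A : Set X, ¬(A ∈ x ↔ A ∈ y) := not_forall.1 (mt Set.ext hxy)
  by_cases hAx : A ∈ x
  · have hAy : A ∉ y := fun hAy => hA (iff_of_true hAx hAy)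
    exact ⟨_, _, isOpen_cantorTop_mem X A, isOpen_cantorTop_notMem X A, hAx, hAy,
      disjoint_left.2 fun _ h h' => h' h⟩
  · have hAy : A ∈ y := by_contra fun hAy => hA (iff_of_false hAx hAy)
    exact ⟨_, _, isOpen_cantorTop_notMem X A, isOpen_cantorTop_mem X A, hAx, hAy,
      disjoint_left.2 fun _ h h' => h h'⟩

theorem continuous_insertEmpty_map {X Y : Type*} (j : Y → X) :
    Continuous fun F : Ultrafilter Y => (Filter.map j F).insertEmpty := by
  refine continuous_generateFrom_iff.2 ?_
  rintro _ (⟨A, rfl⟩ | ⟨A, rfl⟩)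
  · have : (fun F : Ultrafilter Y => (Filter.map j F).insertEmpty) ⁻¹' {x | A ∈ x} =
        {_F | A = ∅} ∪ {F | j ⁻¹' A ∈ F} := rfl
    rw [this]
    exact isOpen_const.union (ultrafilter_isOpen_basic _)
  · have : (fun F : Ultrafilter Y => (Filter.map j F).insertEmpty) ⁻¹' {x | A ∉ x} =
        {_F | A ≠ ∅} ∩ {F | (j ⁻¹' A)ᶜ ∈ F} := by
      ext F
      simp [Filter.mem_insertEmpty, Ultrafilter.compl_mem_iff_notMem]
    rw [this]
    exact isOpen_const.inter (ultrafilter_isOpen_basic _)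

end CantorCube

theorem stmt19_general {X Y : Type u} (hcard : Cardinal.mk Y ≤ Cardinal.mk X) :
    ∃ f : Ultrafilter Y → ↥{τ : Set (Set X) | IsTopologyOn τ},
      @Topology.IsEmbedding _ _ Ultrafilter.topologicalSpace
        (TopologicalSpace.induced Subtype.val (cantorTop X)) f := by
  obtain ⟨j⟩ := Cardinal.le_def _ _ |>.mp hcard
  let := cantorTop X
  have := t2Space_cantorTop X
  have hmap : Injective (Ultrafilter.map j) := fun F G h =>
    Ultrafilter.coe_injective (Filter.map_injective j.injective (congrArg Ultrafilter.toFilter h))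
  have hinj : Injective fun F : Ultrafilter Y => (Filter.map j F).insertEmpty :=
    Filter.insertEmpty_injective_ultrafilter.comp hmap
  refine ⟨fun F => ⟨_, Filter.isTopologyOn_insertEmpty (Filter.map j F)⟩, ?_⟩
  exact ((continuous_insertEmpty_map j).subtype_mk _).isClosedEmbedding
    (fun F G h => hinj (congrArg Subtype.val h)) |>.isEmbedding

/-- For `X` infinite and `|Y| ≤ |X|`, the subspace `Top(X)` of `2^{𝒫(X)}` contains a copy
of `βY`, the space of ultrafilters on the discrete space `Y` with the Stone topology. -/
theorem stmt19 {X Y : Type u} [Infinite X] (hcard : Cardinal.mk Y ≤ Cardinal.mk X) :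
    ∃ f : Ultrafilter Y → ↥{τ : Set (Set X) | IsTopologyOn τ},
      @Topology.IsEmbedding _ _ Ultrafilter.topologicalSpace
        (TopologicalSpace.induced Subtype.val (cantorTop X)) f :=
  stmt19_general hcard
end
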